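/- For every z ∈ ℂ with Im z ≥ −1/2 and z ≠ −i/2, the series extension of the logistic Cauchy transform does not vanish: Σ_{n=1}^∞ i/(z + (n − 1/2)i)² ≠ 0. -/

import Mathlib

/-!
Write `w_n = z + (n + 1/2) i`, so that `Re w_n = Re z` and `Im w_n ≥ n ≥ 0`, and
`i / w² = (2 Re w Im w + i ((Re w)² - (Im w)²)) / |w|⁴`.
If `Re z ≠ 0`, every term of `Re z · Σ i / w_n²` has nonnegative real part, and the term
`n = 1` has positive real part. If `Re z = 0`, then `z = i y` with `y > -1/2`, and every term
of `i · Σ i / w_n²` has positive real part. Either way the sum cannot vanish.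
-/

open Complex

lemma summable_inv_add_natCast_sq (v : ℂ) : Summable fun n : ℕ => ((v + n) ^ 2)⁻¹ := by
  simpa [Function.comp_def] using
    (EisensteinSeries.linear_right_summable v 1 (k := 2) le_rfl).comp_injective Nat.cast_injective

lemma summable_I_div_add_natCast_add_mul_I_sq (z a : ℂ) :
    Summable fun n : ℕ => I / (z + (n + a) * I) ^ 2 := by
  refine ((summable_inv_add_natCast_sq (a - I * z)).mul_left (-I)).congr fun n => ?_
  have hrot : z + (n + a) * I = I * (a - I * z + n) := by linear_combination z * I_sq
  rw [hrot, mul_pow, I_sq, div_eq_mul_inv, mul_inv, inv_neg, inv_one]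
  ring

lemma Complex.tsum_ne_zero_of_re_mul_nonneg {ι : Type*} {f : ι → ℂ} (hf : Summable f) (c : ℂ)
    (hnonneg : ∀ i, 0 ≤ (c * f i).re) (i : ι) (hpos : 0 < (c * f i).re) : ∑' i, f i ≠ 0 := by
  intro hzero
  have hsum : Summable fun i => (c * f i).re := (hasSum_re (hf.mul_left c).hasSum).summable
  have htsum := hsum.tsum_pos hnonneg i hpos
  rw [← re_tsum (hf.mul_left c), tsum_mul_left, hzero, mul_zero, zero_re] at htsum
  exact htsum.false

lemma Complex.re_I_div_sq (w : ℂ) : (I / w ^ 2).re = 2 * w.re * w.im / normSq w ^ 2 := by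
  rw [div_re, map_pow]
  simp only [I_re, I_im, pow_two, mul_re, mul_im]
  ring

lemma Complex.im_I_div_sq (w : ℂ) : (I / w ^ 2).im = (w.re ^ 2 - w.im ^ 2) / normSq w ^ 2 := by
  rw [div_im, map_pow]
  simp only [I_re, I_im, pow_two, mul_re, mul_im]
  ring

lemma Complex.re_mul_re_I_div_sq_nonneg {w : ℂ} (hw : 0 ≤ w.im) :
    0 ≤ w.re * (I / w ^ 2).re := by
  rw [re_I_div_sq, ← mul_div_assoc, show w.re * (2 * w.re * w.im) = 2 * w.re ^ 2 * w.im by ring]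
  positivity

lemma Complex.re_mul_re_I_div_sq_pos {w : ℂ} (hre : w.re ≠ 0) (him : 0 < w.im) :
    0 < w.re * (I / w ^ 2).re := by
  have hw : w ≠ 0 := fun h => hre (by simp [h])
  rw [re_I_div_sq, ← mul_div_assoc, show w.re * (2 * w.re * w.im) = 2 * w.re ^ 2 * w.im by ring]
  have := normSq_pos.mpr hw
  positivity

lemma Complex.re_I_mul_I_div_sq_pos {w : ℂ} (hre : w.re = 0) (him : w.im ≠ 0) :
    0 < (I * (I / w ^ 2)).re := by
  have hw : w ≠ 0 := fun h => him (by simp [h])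
  rw [I_mul_re, im_I_div_sq, hre, ← neg_div, zero_pow two_ne_zero, zero_sub, neg_neg]
  have := normSq_pos.mpr hw
  positivity

/-- For every `z ∈ ℂ` with `Im z ≥ −1/2` and `z ≠ −i/2`, the series extension of the
logistic Cauchy transform does not vanish. -/
theorem logistic_extension_ne_zero (z : ℂ) (him : -(1 / 2 : ℝ) ≤ z.im)
    (hz : z ≠ -Complex.I / 2) :
    (∑' n : ℕ, Complex.I / (z + ((n : ℂ) + 1 / 2) * Complex.I) ^ 2) ≠ 0 := by
  have hw_re : ∀ n : ℕ, (z + ((n : ℂ) + 1 / 2) * I).re = z.re := fun n => by simp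
  have hw_im : ∀ n : ℕ, (z + ((n : ℂ) + 1 / 2) * I).im = z.im + (n + 1 / 2) := fun n => by simp
  have hsum := summable_I_div_add_natCast_add_mul_I_sq z (1 / 2)
  rcases eq_or_ne z.re 0 with hre | hre
  · have him_lt : -(1 / 2) < z.im :=
      him.lt_of_ne fun h => hz (ext (by simp [hre]) (by simp [← h]; norm_num))
    have hpos : ∀ n : ℕ, 0 < (I * (I / (z + ((n : ℂ) + 1 / 2) * I) ^ 2)).re := fun n =>
      re_I_mul_I_div_sq_pos ((hw_re n).trans hre)
        (by rw [hw_im]; linarith [n.cast_nonneg (α := ℝ)])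
    exact tsum_ne_zero_of_re_mul_nonneg hsum I (fun n => (hpos n).le) 0 (hpos 0)
  · refine tsum_ne_zero_of_re_mul_nonneg hsum z.re (fun n => ?_) 1 ?_
    · rw [re_ofReal_mul, ← hw_re n]
      exact re_mul_re_I_div_sq_nonneg (by rw [hw_im]; linarith [n.cast_nonneg (α := ℝ)])
    · rw [re_ofReal_mul, ← hw_re 1]
      exact re_mul_re_I_div_sq_pos (by rwa [hw_re]) (by rw [hw_im]; push_cast; linarith)
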